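/- arXiv:1905.01196 — 2 statements merged into one kernel-verified Lean document; each statement's English description precedes it below -/
import Mathlib

section
/- Define X(u,v) = ∫₀ᵘ (cos ξ, sin ξ, 0) dξ + ∫₀ᵛ (0, sin ξ, cos ξ) dξ for (u,v) ∈ (-π/2,π/2)². Then X_u·X_u = 1, X_v·X_v = 1, X_u·X_v = sin u sin v, so X is a Chebyshev net, its Gaussian curvature is K(u,v) = cos u cos v / (1 - sin²u sin²v)² > 0, and the lift f(u,v) = (u+v)∂₀ + X(u,v) into ℝ⁴₁ has vanishing mean curvature vector (since X_{uv} = 0). -/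
noncomputable section

open Matrix

/-- The Chebyshev net X(u,v) = ∫₀ᵘ(cos ξ, sin ξ, 0)dξ + ∫₀ᵛ(0, sin ξ, cos ξ)dξ. -/
def X15 : ℝ × ℝ → Fin 3 → ℝ := fun p =>
  (∫ ξ in (0 : ℝ)..p.1, ![Real.cos ξ, Real.sin ξ, 0]) +
  (∫ ξ in (0 : ℝ)..p.2, ![(0 : ℝ), Real.sin ξ, Real.cos ξ])

lemma hasDerivAt_integral_aux {f : ℝ → Fin 3 → ℝ} (hf : Continuous f) (x : ℝ) :
    HasDerivAt (fun u => ∫ ξ in (0 : ℝ)..u, f ξ) (f x) x :=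
  intervalIntegral.integral_hasDerivAt_right (hf.intervalIntegrable 0 x)
    (hf.stronglyMeasurableAtFilter _ _) hf.continuousAt

/-- On (-π/2,π/2)², X15 has X_u = (cos u, sin u, 0), X_v = (0, sin v, cos v), is a Chebyshev
    net with X_u·X_v = sin u sin v, its Gaussian curvature (LN - M²)/(EG - F²) equals
    cos u cos v/(1 - sin²u sin²v)² > 0, and the lift f(u,v) = (u+v)∂₀ + X has vanishing
    mean curvature vector since X_{uv} = 0. -/
theorem stmt15 :
    ∀ p : ℝ × ℝ, p ∈ Set.Ioo (-(Real.pi / 2)) (Real.pi / 2) ×ˢ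
        Set.Ioo (-(Real.pi / 2)) (Real.pi / 2) →
      let Xu : Fin 3 → ℝ := ![Real.cos p.1, Real.sin p.1, 0]
      let Xv : Fin 3 → ℝ := ![(0 : ℝ), Real.sin p.2, Real.cos p.2]
      let Xuu : Fin 3 → ℝ := ![-Real.sin p.1, Real.cos p.1, 0]
      let Xvv : Fin 3 → ℝ := ![(0 : ℝ), Real.cos p.2, -Real.sin p.2]
      let W := 1 - (Real.sin p.1 * Real.sin p.2)^2
      let e2 := (1 / Real.sqrt W) • (crossProduct Xu Xv)
      HasDerivAt (fun u => X15 (u, p.2)) Xu p.1 ∧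
      HasDerivAt (fun v => X15 (p.1, v)) Xv p.2 ∧
      Xu ⬝ᵥ Xu = 1 ∧ Xv ⬝ᵥ Xv = 1 ∧ Xu ⬝ᵥ Xv = Real.sin p.1 * Real.sin p.2 ∧
      -- Gaussian curvature K = (LN - M²)/(EG - F²), with M = X_{uv}·e₂ = 0:
      ((Xuu ⬝ᵥ e2) * (Xvv ⬝ᵥ e2) - ((0 : Fin 3 → ℝ) ⬝ᵥ e2)^2) / W =
        Real.cos p.1 * Real.cos p.2 / W^2 ∧
      0 < Real.cos p.1 * Real.cos p.2 / W^2 ∧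
      -- X_{uv} = 0 (the v-derivative of u ↦ X_u is zero), hence H_f = 0:
      HasDerivAt (fun v => (![Real.cos p.1, Real.sin p.1, 0] : Fin 3 → ℝ)) 0 p.2 ∧
      (-(1 : ℝ) / (2 * (Real.sin (Real.arccos (Real.sin p.1 * Real.sin p.2) / 2))^2)) •
          (0 : Fin 3 → ℝ) = 0 := by
  rintro ⟨u, v⟩ ⟨hu, hv⟩
  intro Xu Xv Xuu Xvv W e2
  have hc1 : Real.cos u > 0 := Real.cos_pos_of_mem_Ioo hu
  have hc2 : Real.cos v > 0 := Real.cos_pos_of_mem_Ioo hv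
  have pyth1 := Real.sin_sq_add_cos_sq u
  have pyth2 := Real.sin_sq_add_cos_sq v
  have hs1 : Real.sin u ^ 2 < 1 := by nlinarith
  have hs2 : Real.sin v ^ 2 ≤ 1 := by nlinarith
  have hW : 0 < W := by
    show (0:ℝ) < 1 - (Real.sin u * Real.sin v)^2
    nlinarith [sq_nonneg (Real.sin v), sq_nonneg (Real.sin u)]
  have hsqrt : Real.sqrt W * Real.sqrt W = W := Real.mul_self_sqrt hW.le
  have hcont1 : Continuous (fun ξ : ℝ => (![Real.cos ξ, Real.sin ξ, 0] : Fin 3 → ℝ)) := by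
    refine continuous_pi fun i => ?_
    fin_cases i <;> simp <;> fun_prop
  have hcont2 : Continuous (fun ξ : ℝ => (![(0:ℝ), Real.sin ξ, Real.cos ξ] : Fin 3 → ℝ)) := by
    refine continuous_pi fun i => ?_
    fin_cases i <;> simp <;> fun_prop
  refine ⟨?_, ?_, ?_, ?_, ?_, ?_, ?_, ?_, ?_⟩
  · have h1 := hasDerivAt_integral_aux hcont1 u
    simpa [X15] using h1.add_const (∫ ξ in (0:ℝ)..v, ![(0:ℝ), Real.sin ξ, Real.cos ξ])
  · have h2 := hasDerivAt_integral_aux hcont2 v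
    simpa [X15, add_comm] using
      h2.add_const (∫ ξ in (0:ℝ)..u, ![Real.cos ξ, Real.sin ξ, 0])
  · simp [Xu, dotProduct, Fin.sum_univ_three]; nlinarith
  · simp [Xv, dotProduct, Fin.sum_univ_three]; nlinarith
  · simp [Xu, Xv, dotProduct, Fin.sum_univ_three]
  · show ((Xuu ⬝ᵥ e2) * (Xvv ⬝ᵥ e2) - ((0 : Fin 3 → ℝ) ⬝ᵥ e2)^2) / W =
      Real.cos u * Real.cos v / W^2
    have hcross : (crossProduct Xu Xv : Fin 3 → ℝ) =
        ![Real.sin u * Real.cos v, -(Real.cos u * Real.cos v), Real.cos u * Real.sin v] := by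
      simp [Xu, Xv, cross_apply]
    have h1 : Xuu ⬝ᵥ e2 = (1 / Real.sqrt W) * (-Real.cos v) := by
      simp [e2, hcross, Xuu, dotProduct, Fin.sum_univ_three]
      ring_nf
      linear_combination (-(Real.sqrt W)⁻¹ * Real.cos v) * pyth1
    have h2 : Xvv ⬝ᵥ e2 = (1 / Real.sqrt W) * (-Real.cos u) := by
      simp [e2, hcross, Xvv, dotProduct, Fin.sum_univ_three]
      ring_nf
      linear_combination (-(Real.sqrt W)⁻¹ * Real.cos u) * pyth2
    have h0 : ((0 : Fin 3 → ℝ) ⬝ᵥ e2) = 0 := by simp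
    rw [h1, h2, h0]
    have hW' : W ≠ 0 := hW.ne'
    have hsq : Real.sqrt W ≠ 0 := by positivity
    field_simp
    rw [Real.sq_sqrt hW.le]; ring
  · positivity
  · exact hasDerivAt_const v _
  · exact smul_zero _
end
end

section
/- Let n₀ : I → S² and n₃ : J → S² be smooth curves into the unit sphere of {0}×ℝ³ such that |n₀(u)·n₃(v)| < 1 for all (u,v) ∈ I×J, and define f(u,v) = P₀ + (u+v)∂₀ + ∫₀ᵘ n₀(ξ)dξ + ∫₀ᵛ n₃(ξ)dξ in ℝ⁴₁. Then f_u = ∂₀ + n₀(u) and f_v = ∂₀ + n₃(v) are lightlike, the induced metric is ds² = (-1 + n₀(u)·n₃(v)) 2 du dv, which is a nondegenerate Lorentzian metric, and f_{uv} = 0, so f is a timelike minimal (critical) immersion. -/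
noncomputable section

open Matrix

def mink (v w : Fin 4 → ℝ) : ℝ := -(v 0 * w 0) + v 1 * w 1 + v 2 * w 2 + v 3 * w 3

def d0 : Fin 4 → ℝ := ![1, 0, 0, 0]

def emb (x : Fin 3 → ℝ) : Fin 4 → ℝ := Fin.cons 0 x

def embL : (Fin 3 → ℝ) →ₗ[ℝ] (Fin 4 → ℝ) where
  toFun := emb
  map_add' x y := by
    funext i
    refine Fin.cases ?_ (fun j => ?_) i <;> simp [emb]
  map_smul' c x := by
    funext i
    refine Fin.cases ?_ (fun j => ?_) i <;> simp [emb]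

def embCL : (Fin 3 → ℝ) →L[ℝ] (Fin 4 → ℝ) :=
  { embL with cont := embL.continuous_of_finiteDimensional }

lemma ftc (n : ℝ → Fin 3 → ℝ) (hn : Continuous n) (u : ℝ) :
    HasDerivAt (fun u' => ∫ ξ in (0 : ℝ)..u', n ξ) (n u) u :=
  intervalIntegral.integral_hasDerivAt_right (hn.intervalIntegrable 0 u)
    (hn.stronglyMeasurableAtFilter _ _) hn.continuousAt

lemma mink_calc (x y : Fin 3 → ℝ) :
    mink (d0 + emb x) (d0 + emb y) = -1 + x ⬝ᵥ y := by
  simp [mink, d0, emb, dotProduct, Fin.sum_univ_three]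
  have h2 : ∀ z : Fin 3 → ℝ, (Fin.cons (0:ℝ) z : Fin 4 → ℝ) 2 = z 1 := fun z => by
    rw [show (2 : Fin 4) = Fin.succ 1 from rfl, Fin.cons_succ]
  have h3 : ∀ z : Fin 3 → ℝ, (Fin.cons (0:ℝ) z : Fin 4 → ℝ) 3 = z 2 := fun z => by
    rw [show (3 : Fin 4) = Fin.succ 2 from rfl, Fin.cons_succ]
  rw [h2, h2, h3, h3]
  ring

/-- Let n₀ : I → S², n₃ : J → S² be smooth curves in the unit sphere of {0}×ℝ³ with
    |n₀(u)·n₃(v)| < 1 on I×J, and f(u,v) = P₀ + (u+v)∂₀ + ∫₀ᵘn₀ + ∫₀ᵛn₃. Then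
    f_u = ∂₀+n₀(u) and f_v = ∂₀+n₃(v) are lightlike, ⟨f_u,f_v⟩ = -1 + n₀(u)·n₃(v) < 0
    (nondegenerate Lorentzian induced metric), and f_{uv} = 0: f is a timelike minimal
    (critical) immersion. -/
theorem stmt18 (I J : Set ℝ) (hI : IsOpen I) (hJ : IsOpen J)
    (n0 n3 : ℝ → Fin 3 → ℝ) (hn0smooth : ContDiff ℝ (⊤ : ℕ∞) n0) (hn3smooth : ContDiff ℝ (⊤ : ℕ∞) n3)
    (hn0unit : ∀ u ∈ I, n0 u ⬝ᵥ n0 u = 1) (hn3unit : ∀ v ∈ J, n3 v ⬝ᵥ n3 v = 1)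
    (hdot : ∀ u ∈ I, ∀ v ∈ J, |n0 u ⬝ᵥ n3 v| < 1)
    (P0 : Fin 4 → ℝ)
    (f : ℝ × ℝ → Fin 4 → ℝ)
    (hf : ∀ p : ℝ × ℝ, f p = P0 + (p.1 + p.2) • d0 +
      emb (∫ ξ in (0 : ℝ)..p.1, n0 ξ) + emb (∫ ξ in (0 : ℝ)..p.2, n3 ξ)) :
    ∀ u ∈ I, ∀ v ∈ J,
      HasDerivAt (fun u' => f (u', v)) (d0 + emb (n0 u)) u ∧
      HasDerivAt (fun v' => f (u, v')) (d0 + emb (n3 v)) v ∧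
      mink (d0 + emb (n0 u)) (d0 + emb (n0 u)) = 0 ∧
      mink (d0 + emb (n3 v)) (d0 + emb (n3 v)) = 0 ∧
      mink (d0 + emb (n0 u)) (d0 + emb (n3 v)) = -1 + n0 u ⬝ᵥ n3 v ∧
      mink (d0 + emb (n0 u)) (d0 + emb (n3 v)) < 0 ∧
      -- f_{uv} = 0: the v-derivative of the field (u,v) ↦ f_u(u,v) = ∂₀ + n₀(u) vanishes
      HasDerivAt (fun _ : ℝ => d0 + emb (n0 u)) 0 v := by
  intro u hu v hv
  have hc0 : Continuous n0 := hn0smooth.continuous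
  have hc3 : Continuous n3 := hn3smooth.continuous
  have h1 : HasDerivAt (fun u' => f (u', v)) (d0 + emb (n0 u)) u := by
    have : (fun u' => f (u', v)) = fun u' => P0 + (u' + v) • d0 +
        emb (∫ ξ in (0 : ℝ)..u', n0 ξ) + emb (∫ ξ in (0 : ℝ)..v, n3 ξ) := by
      funext u'; exact hf (u', v)
    rw [this]
    have hs : HasDerivAt (fun u' : ℝ => P0 + (u' + v) • d0) d0 u := by
      have := ((hasDerivAt_id u).add_const v).smul_const d0
      simpa using (this.const_add P0)
    have hi : HasDerivAt (fun u' => emb (∫ ξ in (0 : ℝ)..u', n0 ξ)) (emb (n0 u)) u := by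
      have := embCL.hasFDerivAt.comp_hasDerivAt u (ftc n0 hc0 u)
      simpa [embCL, embL, Function.comp_def] using this
    simpa using (hs.add hi).add_const (emb (∫ ξ in (0 : ℝ)..v, n3 ξ))
  have h2 : HasDerivAt (fun v' => f (u, v')) (d0 + emb (n3 v)) v := by
    have : (fun v' => f (u, v')) = fun v' => P0 + (u + v') • d0 +
        emb (∫ ξ in (0 : ℝ)..u, n0 ξ) + emb (∫ ξ in (0 : ℝ)..v', n3 ξ) := by
      funext v'; exact hf (u, v')
    rw [this]
    have hs : HasDerivAt (fun v' : ℝ => P0 + (u + v') • d0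
        + emb (∫ ξ in (0 : ℝ)..u, n0 ξ)) d0 v := by
      have := ((hasDerivAt_id v).const_add u).smul_const d0
      simpa using ((this.const_add P0).add_const (emb (∫ ξ in (0 : ℝ)..u, n0 ξ)))
    have hi : HasDerivAt (fun v' => emb (∫ ξ in (0 : ℝ)..v', n3 ξ)) (emb (n3 v)) v := by
      have := embCL.hasFDerivAt.comp_hasDerivAt v (ftc n3 hc3 v)
      simpa [embCL, embL, Function.comp_def] using this
    exact hs.add hi
  refine ⟨h1, h2, ?_, ?_, mink_calc _ _, ?_, hasDerivAt_const _ _⟩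
  · rw [mink_calc, hn0unit u hu]; ring
  · rw [mink_calc, hn3unit v hv]; ring
  · rw [mink_calc]
    have := (abs_lt.mp (hdot u hu v hv)).2
    linarith
end
end
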